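/- Define θ_i = λ_{N_i} + γ + λ_{N_i+1}^{1/2}L₁ + L₂ where γ = min over i ∈ {1,…,n} of (λ_{N_i+1} - λ_{N_i} - (i-1)λ_{N_{i-1}} - (i+1)λ_{N_i+1}^{1/2}L₁ - (i+1)L₂)/(i+1). If the spectral gap condition λ_{N_i+1} - λ_{N_i} > (i-1)λ_{N_{i-1}} + (i+1)λ_{N_i+1}^{1/2}L₁ + (i+1)L₂ holds for all i (with λ_{N₀} = 0 and θ₀ = 0, λ_{N_{i-1}} < λ_{N_{i-1}+1} ≤ λ_{N_i} < λ_{N_i+1}), then for all i=1,…,n and j=0,…,i-1 one has θ_i + j·θ_{i-1} ∈ (λ_{N_i}, λ_{N_i+1}), and moreover min{θ_i + jθ_{i-1} - λ_{N_i}, λ_{N_i+1} - θ_i - jθ_{i-1}} ≥ γ + λ_{N_i+1}^{1/2}L₁ + L₂. -/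
import Mathlib


/-- With θ_i = λ_{N_i} + γ + λ_{N_i+1}^{1/2}L₁ + L₂ (θ₀ = 0) and γ the minimum over
i ∈ {1,…,n} of (λ_{N_i+1} - λ_{N_i} - (i-1)λ_{N_{i-1}} - (i+1)λ_{N_i+1}^{1/2}L₁ -
(i+1)L₂)/(i+1), if the spectral gap condition holds for all i, then for all
i = 1,…,n and j = 0,…,i-1 one has θ_i + jθ_{i-1} ∈ (λ_{N_i}, λ_{N_i+1}) and
min{θ_i + jθ_{i-1} - λ_{N_i}, λ_{N_i+1} - θ_i - jθ_{i-1}} ≥ γ + λ_{N_i+1}^{1/2}L₁ + L₂. -/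
theorem stmt4 (n : ℕ) (hn : 1 ≤ n) (lam lam' : ℕ → ℝ) (L₁ L₂ γ : ℝ) (θ : ℕ → ℝ)
    (hL₁ : 0 < L₁) (hL₂ : 0 < L₂)
    (h0 : lam 0 = 0) (hθ0 : θ 0 = 0) (hpos1 : 0 < lam 1)
    (hinter : ∀ i : ℕ, 2 ≤ i → i ≤ n → lam (i - 1) < lam' (i - 1) ∧ lam' (i - 1) ≤ lam i)
    (hlt : ∀ i : ℕ, 1 ≤ i → i ≤ n → lam i < lam' i)
    (hγ : γ = (Finset.Icc 1 n).inf' (Finset.nonempty_Icc.mpr hn)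
      (fun i => (lam' i - lam i - ((i : ℝ) - 1) * lam (i - 1)
        - ((i : ℝ) + 1) * Real.sqrt (lam' i) * L₁ - ((i : ℝ) + 1) * L₂) / ((i : ℝ) + 1)))
    (hθ : ∀ i : ℕ, 1 ≤ i → θ i = lam i + γ + Real.sqrt (lam' i) * L₁ + L₂)
    (hgap : ∀ i : ℕ, 1 ≤ i → i ≤ n →
      lam' i - lam i > ((i : ℝ) - 1) * lam (i - 1)
        + ((i : ℝ) + 1) * Real.sqrt (lam' i) * L₁ + ((i : ℝ) + 1) * L₂) :
    ∀ i : ℕ, 1 ≤ i → i ≤ n → ∀ j : ℕ, j ≤ i - 1 →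
      (lam i < θ i + (j : ℝ) * θ (i - 1) ∧ θ i + (j : ℝ) * θ (i - 1) < lam' i) ∧
      min (θ i + (j : ℝ) * θ (i - 1) - lam i) (lam' i - θ i - (j : ℝ) * θ (i - 1))
        ≥ γ + Real.sqrt (lam' i) * L₁ + L₂ := by
  -- positivity of γ
  have hγpos : 0 < γ := by
    rw [hγ]
    rw [Finset.lt_inf'_iff]
    intro i hi
    rw [Finset.mem_Icc] at hi
    have h := hgap i hi.1 hi.2
    have : (0:ℝ) < (i:ℝ) + 1 := by positivity
    apply div_pos (by linarith) this
  -- positivity of lam k for 1 ≤ k ≤ n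
  have hlampos : ∀ k, 1 ≤ k → k ≤ n → 0 < lam k := by
    intro k
    induction k with
    | zero => omega
    | succ m ih =>
      intro _ hk
      rcases Nat.eq_zero_or_pos m with hm | hm
      · subst hm; exact hpos1
      · have h2 : 2 ≤ m + 1 := by omega
        have h := hinter (m+1) h2 hk
        simp only [Nat.add_sub_cancel] at h
        have := ih hm (by omega)
        linarith [h.1, h.2]
  intro i hi1 hin j hj
  have hsq : 0 ≤ Real.sqrt (lam' i) := Real.sqrt_nonneg _
  have hs : 0 < Real.sqrt (lam' i) * L₁ + L₂ := by positivity
  have hθi : θ i = lam i + γ + Real.sqrt (lam' i) * L₁ + L₂ := hθ i hi1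
  have hlam0 : 0 ≤ lam (i - 1) := by
    rcases Nat.eq_or_lt_of_le hi1 with h | h
    · simp [← h, h0]
    · exact le_of_lt (hlampos (i-1) (by omega) (by omega))
  have ha : (1:ℝ) ≤ (i:ℝ) := by exact_mod_cast hi1
  -- bounds on j * θ (i-1)
  have hjθ0 : 0 ≤ (j:ℝ) * θ (i - 1) ∧
      (j:ℝ) * θ (i - 1) ≤ ((i:ℝ) - 1) * (lam (i-1) + γ + Real.sqrt (lam' i) * L₁ + L₂) := by
    rcases Nat.eq_or_lt_of_le hi1 with h | h
    · have hj0 : j = 0 := by omega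
      subst hj0
      constructor
      · simp
      · simp only [Nat.cast_zero, zero_mul]
        rw [← h]
        push_cast
        ring_nf
        nlinarith [hγpos, hlam0, hs]
    · have hi2 : 2 ≤ i := h
      have hθi1 : θ (i-1) = lam (i-1) + γ + Real.sqrt (lam' (i-1)) * L₁ + L₂ :=
        hθ (i-1) (by omega)
      have hint := hinter i hi2 hin
      have hlt' := hlt i hi1 hin
      have hsqle : Real.sqrt (lam' (i-1)) ≤ Real.sqrt (lam' i) := by
        apply Real.sqrt_le_sqrt
        linarith [hint.2]
      have hsq1 : 0 ≤ Real.sqrt (lam' (i-1)) := Real.sqrt_nonneg _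
      have hθpos : 0 ≤ θ (i-1) := by
        rw [hθi1]
        have := hlampos (i-1) (by omega) (by omega)
        nlinarith
      have hθle : θ (i-1) ≤ lam (i-1) + γ + Real.sqrt (lam' i) * L₁ + L₂ := by
        rw [hθi1]; nlinarith
      have hjle : (j:ℝ) ≤ (i:ℝ) - 1 := by
        have : (j:ℝ) + 1 ≤ (i:ℝ) := by exact_mod_cast Nat.add_le_of_le_sub hi1 hj
        linarith
      constructor
      · positivity
      · calc (j:ℝ) * θ (i-1) ≤ (j:ℝ) * (lam (i-1) + γ + Real.sqrt (lam' i) * L₁ + L₂) := by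
              apply mul_le_mul_of_nonneg_left hθle (by positivity)
          _ ≤ ((i:ℝ) - 1) * (lam (i-1) + γ + Real.sqrt (lam' i) * L₁ + L₂) := by
              apply mul_le_mul_of_nonneg_right hjle
              nlinarith [hγpos, hlam0, hs]
  obtain ⟨hjl, hjr⟩ := hjθ0
  -- γ ≤ the i-th term
  have hγle : ((i:ℝ) + 1) * γ ≤ lam' i - lam i - ((i:ℝ) - 1) * lam (i-1)
      - ((i:ℝ) + 1) * Real.sqrt (lam' i) * L₁ - ((i:ℝ) + 1) * L₂ := by
    have hmem : i ∈ Finset.Icc 1 n := Finset.mem_Icc.mpr ⟨hi1, hin⟩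
    have := hγ ▸ Finset.inf'_le (b := i)
      (fun k => (lam' k - lam k - ((k : ℝ) - 1) * lam (k - 1)
        - ((k : ℝ) + 1) * Real.sqrt (lam' k) * L₁ - ((k : ℝ) + 1) * L₂) / ((k : ℝ) + 1)) hmem
    have hip : (0:ℝ) < (i:ℝ) + 1 := by positivity
    rw [le_div_iff₀ hip] at this
    linarith
  have hnl : 0 ≤ ((i:ℝ) - 1) * lam (i-1) := mul_nonneg (by linarith) hlam0
  constructor
  · constructor
    · rw [hθi]; linarith
    · rw [hθi] at *
      nlinarith [hγpos, hs]
  · rw [hθi] at *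
    rw [ge_iff_le, le_min_iff]
    constructor
    · linarith
    · nlinarith [hγpos, hs]
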